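/- Every injection σ : F → ℕ^r defined on a finite subset F ⊆ ℕ^r that satisfies σ(α)∧σ(β) = α∧β for all α, β ∈ F can be extended to a bijection π : ℕ^r → ℕ^r satisfying π(α)∧π(β) = α∧β for all α, β ∈ ℕ^r (i.e., to an element of H_r). -/

import Mathlib

/-!
Wedge preservation says exactly that, for every `k`, two leaves agree in their first `k`
coordinates iff their images do. Permuting the children of every vertex `s` of the tree by a
permutation `g s` gives a bijection of `ℕ^r` with this property, whose `i`-th coordinate at `α`
is `g (α.take i) α[i]`. To extend `σ` we need `g (α.take i) α[i] = (σ α)[i]` for `α ∈ F`: at each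
vertex these are finitely many constraints forming a partial injection of `ℕ` (consistency and
injectivity are wedge preservation one level down), and a finite partial injection of an infinite
set extends to a permutation.
-/

/-- The leaves `ℕ^r` of the infinitary rooted tree of depth `r`, encoded as lists of length `r`. -/
def Leaf (r : ℕ) : Type := {l : List ℕ // l.length = r}

/-- The path `p(α)` from the root to a leaf `α`, as the finite set of prefixes of `α`. -/
def pathFinset {r : ℕ} (α : Leaf r) : Finset (List ℕ) :=
  (Finset.range (r + 1)).image (fun k => α.val.take k)

/-- `α ∧ β`, the number of common vertices on the root-paths of `α` and `β`. -/
def wedge {r : ℕ} (α β : Leaf r) : ℕ := (pathFinset α ∩ pathFinset β).card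

theorem exists_perm_comp_eq {ι α : Type*} [Finite ι] [Infinite α] (u v : ι → α)
    (h : ∀ i j, u i = u j ↔ v i = v j) : ∃ g : Equiv.Perm α, ⇑g ∘ u = v := by
  let f : Set.range u ↪ α := ⟨fun x => v x.2.choose, fun x y hxy => Subtype.ext <| by
    rw [← x.2.choose_spec, ← y.2.choose_spec]; exact (h _ _).mpr hxy⟩
  have hlt : Cardinal.mk (Set.range u) < Cardinal.mk α :=
    (Cardinal.lt_aleph0_of_finite _).trans_le (Cardinal.aleph0_le_mk α)
  obtain ⟨g, hg⟩ := Cardinal.extend_function_of_lt f hlt ⟨Equiv.refl α⟩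
  exact ⟨g, funext fun i => (hg ⟨u i, i, rfl⟩).trans <|
    (h _ _).mp (Exists.choose_spec (⟨i, rfl⟩ : ∃ j, u j = u i))⟩

theorem List.take_succ_eq_take_succ_iff {α : Type*} {l m : List α} {n : ℕ} (hl : n < l.length)
    (hm : n < m.length) (h : l.take n = m.take n) :
    l.take (n + 1) = m.take (n + 1) ↔ l[n] = m[n] := by
  rw [List.take_succ_eq_append_getElem hl, List.take_succ_eq_append_getElem hm, h,
    List.append_cancel_left_eq, List.singleton_inj]

namespace List

variable {α : Type*} (g : List α → Equiv.Perm α)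

/-- `treeMap g s l` is the image of the path `l` hanging below the vertex `s`. -/
def treeMap : List α → List α → List α
  | _, [] => []
  | s, a :: l => g s a :: treeMap (s ++ [a]) l

def treeMapInv : List α → List α → List α
  | _, [] => []
  | s, b :: l => (g s).symm b :: treeMapInv (s ++ [(g s).symm b]) l

theorem treeMapInv_treeMap : ∀ s l : List α, treeMapInv g s (treeMap g s l) = l
  | _, [] => rfl
  | s, a :: l => by simp [treeMap, treeMapInv, treeMapInv_treeMap]

theorem treeMap_treeMapInv : ∀ s l : List α, treeMap g s (treeMapInv g s l) = l
  | _, [] => rfl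
  | s, b :: l => by simp [treeMap, treeMapInv, treeMap_treeMapInv]

theorem length_treeMap : ∀ s l : List α, (treeMap g s l).length = l.length
  | _, [] => rfl
  | s, a :: l => by simp [treeMap, length_treeMap]

theorem treeMap_take : ∀ (s l : List α) (k : ℕ), treeMap g s (l.take k) = (treeMap g s l).take k
  | _, [], _ => by simp [treeMap]
  | _, _ :: _, 0 => rfl
  | s, a :: l, k + 1 => by simp [treeMap, treeMap_take]

theorem getElem_treeMap : ∀ (s l : List α) (i : ℕ) (hi : i < (treeMap g s l).length),
    (treeMap g s l)[i] = g (s ++ l.take i) (l[i]'(by rwa [length_treeMap] at hi))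
  | _, [], _, hi => by simp [treeMap] at hi
  | s, a :: l, 0, _ => by simp [treeMap]
  | s, a :: l, i + 1, hi => by simp [treeMap, getElem_treeMap]

def treeEquiv : Equiv.Perm (List α) where
  toFun := treeMap g []
  invFun := treeMapInv g []
  left_inv := treeMapInv_treeMap g []
  right_inv := treeMap_treeMapInv g []

@[simp]
theorem length_treeEquiv (l : List α) : (treeEquiv g l).length = l.length :=
  length_treeMap g [] l

theorem getElem_treeEquiv (l : List α) (i : ℕ) (hi : i < (treeEquiv g l).length) :
    (treeEquiv g l)[i] = g (l.take i) (l[i]'(by rwa [length_treeEquiv] at hi)) :=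
  getElem_treeMap g [] l i hi

theorem treeEquiv_take (l : List α) (k : ℕ) :
    treeEquiv g (l.take k) = (treeEquiv g l).take k :=
  treeMap_take g [] l k

theorem take_treeEquiv_eq_take_treeEquiv_iff (l m : List α) (k : ℕ) :
    (treeEquiv g l).take k = (treeEquiv g m).take k ↔ l.take k = m.take k := by
  rw [← treeEquiv_take, ← treeEquiv_take, (treeEquiv g).injective.eq_iff]

theorem exists_treeEquiv_comp_eq [Infinite α] {ι : Type*} [Finite ι] (u v : ι → List α)
    (hlength : ∀ i, (v i).length = (u i).length)
    (htake : ∀ i j k, (v i).take k = (v j).take k ↔ (u i).take k = (u j).take k) :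
    ∃ g : List α → Equiv.Perm α, ⇑(treeEquiv g) ∘ u = v := by
  have hchild (s : List α) : ∃ g : Equiv.Perm α,
      ∀ i (hi : (u i).take s.length = s ∧ s.length < (u i).length),
        g (u i)[s.length] = (v i)[s.length]'(hlength i ▸ hi.2) := by
    let Below := {i : ι // (u i).take s.length = s ∧ s.length < (u i).length}
    obtain ⟨g, hg⟩ := exists_perm_comp_eq (fun i : Below => (u i.1)[s.length]'i.2.2)
      (fun i => (v i.1)[s.length]'(hlength i.1 ▸ i.2.2)) fun ⟨i, hi⟩ ⟨j, hj⟩ => by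
        have hu : (u i).take s.length = (u j).take s.length := hi.1.trans hj.1.symm
        rw [← take_succ_eq_take_succ_iff _ _ hu, ← htake,
          take_succ_eq_take_succ_iff _ _ ((htake i j _).mpr hu)]
    exact ⟨g, fun i hi => congrFun hg ⟨i, hi⟩⟩
  choose g hg using hchild
  refine ⟨g, funext fun i => ext_getElem (by simp [hlength]) fun n hn _ => ?_⟩
  simp only [Function.comp_apply, getElem_treeEquiv]
  have hn' : n < (u i).length := by simpa using hn
  simpa [Nat.min_eq_left hn'.le] using hg ((u i).take n) i ⟨by simp, by simpa using hn'⟩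

end List

open Finset

theorem Finset.mem_iff_lt_card_of_isLowerSet {S : Finset ℕ} (hS : IsLowerSet (S : Set ℕ))
    (k : ℕ) : k ∈ S ↔ k < #S := by
  constructor
  · intro hk
    simpa using card_le_card fun j hj => hS (Nat.le_of_lt_succ (mem_range.mp hj)) hk
  · intro hk
    by_contra hkS
    have : S ⊆ range k := fun j hj => mem_range.mpr <| lt_of_not_ge fun hkj => hkS (hS hkj hj)
    exact (hk.trans_le ((card_le_card this).trans (card_range k).le)).false

section Wedge

variable {r : ℕ}

theorem Leaf.take_eq_take_min (α : Leaf r) (k : ℕ) : α.val.take k = α.val.take (min k r) := by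
  rw [List.take_eq_take_min, α.property]

theorem pathFinset_inter_pathFinset (α β : Leaf r) : pathFinset α ∩ pathFinset β =
    {k ∈ range (r + 1) | α.val.take k = β.val.take k}.image (α.val.take ·) := by
  ext x
  simp only [pathFinset, mem_inter, mem_image, mem_filter, mem_range]
  constructor
  · rintro ⟨⟨j, hj, rfl⟩, k, hk, hx⟩
    have hjk : k = j := by
      simpa [α.property, β.property, Nat.lt_succ_iff.mp hj, Nat.lt_succ_iff.mp hk] using
        congrArg List.length hx
    subst hjk
    exact ⟨k, ⟨hk, hx.symm⟩, rfl⟩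
  · rintro ⟨k, ⟨hk, hx⟩, rfl⟩
    exact ⟨⟨k, hk, rfl⟩, k, hk, hx.symm⟩

theorem wedge_eq_card (α β : Leaf r) :
    wedge α β = #{k ∈ range (r + 1) | α.val.take k = β.val.take k} := by
  rw [wedge, pathFinset_inter_pathFinset, card_image_of_injOn]
  intro j hj k hk hjk
  simp only [coe_filter, mem_range, Set.mem_ofPred_eq] at hj hk
  simpa [α.property, Nat.lt_succ_iff.mp hj.1, Nat.lt_succ_iff.mp hk.1] using
    congrArg List.length hjk

theorem take_eq_take_iff_lt_wedge (α β : Leaf r) {k : ℕ} (hk : k ≤ r) :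
    α.val.take k = β.val.take k ↔ k < wedge α β := by
  rw [wedge_eq_card, ← mem_iff_lt_card_of_isLowerSet, mem_filter, mem_range]
  · simp [Nat.lt_succ_of_le hk]
  · intro j k hkj hj
    simp only [coe_filter, mem_range, Set.mem_ofPred_eq] at hj ⊢
    refine ⟨by omega, ?_⟩
    simpa [List.take_take, Nat.min_eq_left hkj] using congrArg (List.take k) hj.2

theorem wedge_le (α β : Leaf r) : wedge α β ≤ r + 1 :=
  (card_le_card inter_subset_left).trans <| card_image_le.trans (card_range _).le

theorem wedge_eq_wedge_iff (α β α' β' : Leaf r) : wedge α' β' = wedge α β ↔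
    ∀ k, α'.val.take k = β'.val.take k ↔ α.val.take k = β.val.take k := by
  constructor
  · intro h k
    have hk : min k r ≤ r := min_le_right k r
    rw [α.take_eq_take_min, β.take_eq_take_min, α'.take_eq_take_min, β'.take_eq_take_min,
      take_eq_take_iff_lt_wedge _ _ hk, take_eq_take_iff_lt_wedge _ _ hk, h]
  · intro h
    have hlt (k : ℕ) (hk : k ≤ r) : k < wedge α' β' ↔ k < wedge α β := by
      rw [← take_eq_take_iff_lt_wedge _ _ hk, ← take_eq_take_iff_lt_wedge _ _ hk, h]
    have := wedge_le α β
    have := wedge_le α' β'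
    by_contra hne
    rcases Nat.lt_or_gt_of_ne hne with hlt' | hlt'
    · exact ((hlt _ (by omega)).mpr hlt').false
    · exact ((hlt _ (by omega)).mp hlt').false

end Wedge

theorem finite_extension_to_Hr_general (r : ℕ) (F : Finset (Leaf r)) (σ : Leaf r → Leaf r)
    (hwedge : ∀ α ∈ F, ∀ β ∈ F, wedge (σ α) (σ β) = wedge α β) :
    ∃ π : Leaf r → Leaf r, Function.Bijective π ∧
      (∀ α β : Leaf r, wedge (π α) (π β) = wedge α β) ∧
      ∀ α ∈ F, π α = σ α := by
  obtain ⟨g, hg⟩ := List.exists_treeEquiv_comp_eq (fun α : F => α.1.val) (fun α => (σ α.1).val)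
    (fun α => (σ α.1).property.trans α.1.property.symm)
    (fun α β => (wedge_eq_wedge_iff _ _ _ _).mp (hwedge α α.2 β β.2))
  let π : Leaf r ≃ Leaf r :=
    (List.treeEquiv g).subtypeEquiv fun l => by rw [List.length_treeEquiv]
  refine ⟨π, π.bijective, fun α β => ?_, fun α hα => Subtype.ext (congrFun hg ⟨α, hα⟩)⟩
  exact (wedge_eq_wedge_iff _ _ _ _).mpr
    (List.take_treeEquiv_eq_take_treeEquiv_iff g α.val β.val)

/-- any wedge-preserving injection defined on a finite subset of `ℕ^r` extends
to a wedge-preserving bijection of `ℕ^r`, i.e. to an element of `H_r`. -/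
theorem finite_extension_to_Hr (r : ℕ) (F : Finset (Leaf r)) (σ : Leaf r → Leaf r)
    (hinj : Set.InjOn σ F)
    (hwedge : ∀ α ∈ F, ∀ β ∈ F, wedge (σ α) (σ β) = wedge α β) :
    ∃ π : Leaf r → Leaf r, Function.Bijective π ∧
      (∀ α β : Leaf r, wedge (π α) (π β) = wedge α β) ∧
      ∀ α ∈ F, π α = σ α :=
  finite_extension_to_Hr_general r F σ hwedge
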